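/- Let Φ be a nonempty family of subsets of [m] with s := max_{F∈Φ}|F| and m ≡ s (mod 2), whose long h-vector satisfies h_l(Φ;m) = h_{m-l}(Φ;m) for all l. Then the long f-vector satisfies f(Φ;m) = f(Φ;m)·D(m), i.e., f_l(Φ;m) = (-1)^m·∑_{i=l}^{m}(-1)^i·C(i,l)·f_i(Φ;m) for all 0 ≤ l ≤ m. -/
import Mathlib

open Finset

lemma neg_one_pow_sub' {i l : ℕ} (h : i ≤ l) :
    ((-1 : ℤ)) ^ (l - i) = (-1) ^ l * (-1) ^ i := by
  conv_rhs => rw [← Nat.sub_add_cancel h, pow_add, mul_assoc, ← pow_add]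
  simp [← two_mul, pow_mul]

lemma lem2 : ∀ (k m l : ℕ), k ≤ m →
    ∑ i ∈ range (l+1), (-1:ℤ)^i * (k.choose i) * ((m-i).choose (l-i))
      = ((m-k).choose l) := by
  intro k
  induction k with
  | zero =>
    intro m l _
    rw [Finset.sum_eq_single 0]
    · simp
    · intro i _ hi
      rcases Nat.exists_eq_succ_of_ne_zero hi with ⟨j, rfl⟩
      simp
    · simp
  | succ k ih =>
    intro m l hk
    have hk' : k ≤ m := le_trans (Nat.le_succ k) hk
    rcases Nat.eq_zero_or_pos l with rfl | hl
    · simp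
    rw [Finset.sum_range_succ']
    have hsplit : ∀ i ∈ range l,
        (-1:ℤ)^(i+1) * ((k+1).choose (i+1)) * ((m-(i+1)).choose (l-(i+1)))
        = (-1:ℤ)^(i+1) * (k.choose (i+1)) * ((m-(i+1)).choose (l-(i+1)))
          + (-1) * ((-1:ℤ)^i * (k.choose i) * (((m-1)-i).choose ((l-1)-i))) := by
      intro i _
      have h1 : (k+1).choose (i+1) = k.choose i + k.choose (i+1) := Nat.choose_succ_succ k i
      have h2 : m - (i+1) = (m-1) - i := by omega
      have h3 : l - (i+1) = (l-1) - i := by omega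
      rw [h1, h2, h3]
      push_cast
      ring
    rw [Finset.sum_congr rfl hsplit, Finset.sum_add_distrib]
    have hA : (∑ i ∈ range l, (-1:ℤ)^(i+1) * (k.choose (i+1)) * ((m-(i+1)).choose (l-(i+1))))
        + (-1:ℤ)^0 * (((k+1).choose 0 : ℕ)) * ((m-0).choose (l-0))
        = ((m-k).choose l : ℤ) := by
      have := ih m l hk'
      rw [Finset.sum_range_succ'] at this
      simpa using this
    have hB : ∑ i ∈ range l, (-1) * ((-1:ℤ)^i * (k.choose i) * (((m-1)-i).choose ((l-1)-i)))
        = -(((m-1-k).choose (l-1) : ℤ)) := by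
      have h2 : l - 1 + 1 = l := Nat.sub_add_cancel hl
      have := ih (m-1) (l-1) (by omega)
      rw [h2] at this
      rw [← Finset.mul_sum, this]
      ring
    rw [add_right_comm, hA, hB]
    have hpascal : (m-k).choose l = (m-1-k).choose (l-1) + (m-(k+1)).choose l := by
      have h1 : m - k = (m - (k+1)) + 1 := by omega
      have h2 : l - 1 + 1 = l := Nat.sub_add_cancel hl
      have h3 : m - 1 - k = m - (k+1) := by omega
      rw [h1, h3, ← h2, Nat.choose_succ_succ]
      simp [Nat.succ_eq_add_one]
    rw [hpascal]
    push_cast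
    ring

lemma key (m l : ℕ) (hl : l ≤ m) (g : ℕ → ℤ) :
    ∑ i ∈ range (l+1), (-1:ℤ)^(l-i) * (((m-i).choose (l-i) : ℕ)) *
      ((-1:ℤ)^m * ∑ k ∈ Icc i m, (-1:ℤ)^k * ((k.choose i : ℕ)) * g k)
    = ∑ k ∈ range (m-l+1), (-1:ℤ)^(m-l-k) * (((m-k).choose (m-l-k) : ℕ)) * g k := by
  have step1 : ∀ i : ℕ, (∑ k ∈ Icc i m, (-1:ℤ)^k * ((k.choose i : ℕ)) * g k)
      = ∑ k ∈ range (m+1), (-1:ℤ)^k * ((k.choose i : ℕ)) * g k := by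
    intro i
    apply Finset.sum_subset
    · intro k hk
      simp only [Finset.mem_Icc] at hk
      simp only [Finset.mem_range]
      omega
    · intro k hk hk'
      simp only [Finset.mem_Icc, Finset.mem_range] at hk hk'
      have : k < i := by omega
      simp [Nat.choose_eq_zero_of_lt this]
  simp only [step1, Finset.mul_sum]
  rw [Finset.sum_comm]
  have inner : ∀ k ∈ range (m+1),
      (∑ i ∈ range (l+1), (-1:ℤ)^(l-i) * (((m-i).choose (l-i) : ℕ)) *
        ((-1:ℤ)^m * ((-1:ℤ)^k * ((k.choose i : ℕ)) * g k)))
      = (-1:ℤ)^m * (-1:ℤ)^l * (-1:ℤ)^k * (((m-k).choose l : ℕ)) * g k := by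
    intro k hk
    have hkm : k ≤ m := by simp only [Finset.mem_range] at hk; omega
    have hterm : ∀ i ∈ range (l+1),
        (-1:ℤ)^(l-i) * (((m-i).choose (l-i) : ℕ)) *
          ((-1:ℤ)^m * ((-1:ℤ)^k * ((k.choose i : ℕ)) * g k))
        = ((-1:ℤ)^m * (-1:ℤ)^l * (-1:ℤ)^k * g k) *
            ((-1:ℤ)^i * ((k.choose i : ℕ)) * (((m-i).choose (l-i) : ℕ))) := by
      intro i hi
      have hi' : i ≤ l := by simp only [Finset.mem_range] at hi; omega
      rw [neg_one_pow_sub' hi']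
      ring
    rw [Finset.sum_congr rfl hterm, ← Finset.mul_sum, lem2 k m l hkm]
    ring
  rw [Finset.sum_congr rfl inner]
  have hsub : range (m-l+1) ⊆ range (m+1) := by
    apply Finset.range_subset_range.2; omega
  have hzero : ∀ k ∈ range (m+1), k ∉ range (m-l+1) →
      (-1:ℤ)^m * (-1:ℤ)^l * (-1:ℤ)^k * (((m-k).choose l : ℕ)) * g k = 0 := by
    intro k hk hk'
    simp only [Finset.mem_range] at hk hk'
    have : m - k < l := by omega
    simp [Nat.choose_eq_zero_of_lt this]
  rw [← Finset.sum_subset hsub hzero]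
  apply Finset.sum_congr rfl
  intro k hk
  simp only [Finset.mem_range] at hk
  have hkl : l + k ≤ m := by omega
  have h1 : m - l - k = (m-k) - l := by omega
  have h2 : l ≤ m - k := by omega
  have h3 : m - l - k = m - (l + k) := by omega
  rw [h1, Nat.choose_symm h2, ← h1, h3, neg_one_pow_sub' hkl, pow_add]
  ring

/-- If `Φ` is a nonempty DS-system with `m ≡ size(Φ) (mod 2)` whose long `h`-vector is
symmetric, then its long `f`-vector satisfies `f = f · D(m)`, i.e.
`f_l = (-1)^m ∑_{i=l}^{m} (-1)^i C(i,l) f_i`. -/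
theorem f_vector_DS_relation (m : ℕ) (hm : 2 ≤ m) (Φ : Finset (Finset (Fin m)))
    (hne : Φ.Nonempty) (s : ℕ) (hs : s = Φ.sup Finset.card) (hpar : m % 2 = s % 2)
    (f : ℕ → ℕ) (hf : ∀ i, f i = (Φ.filter fun F => F.card = i).card)
    (h : ℕ → ℤ)
    (hh : ∀ l, h l = ∑ i ∈ Finset.range (l + 1),
      (-1 : ℤ) ^ (l - i) * ((m - i).choose (l - i)) * (f i))
    (hDS : ∀ l ≤ m, h l = h (m - l)) :
    ∀ l ≤ m, (f l : ℤ) =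
      (-1 : ℤ) ^ m * ∑ i ∈ Finset.Icc l m, (-1 : ℤ) ^ i * ((i.choose l : ℤ)) * (f i) := by
  set F' : ℕ → ℤ := fun j =>
    (-1 : ℤ) ^ m * ∑ i ∈ Finset.Icc j m, (-1 : ℤ) ^ i * ((i.choose j : ℤ)) * (f i) with hF'
  intro l
  induction l using Nat.strong_induction_on with
  | _ l IH =>
    intro hl
    have e2 : ∑ i ∈ range (l+1), (-1:ℤ)^(l-i) * (((m-i).choose (l-i) : ℕ)) * (F' i)
        = h l := by
      have := key m l hl (fun k => (f k : ℤ))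
      simp only [hF']
      rw [this, ← hh (m - l), ← hDS l hl]
    have e1 : ∑ i ∈ range (l+1), (-1:ℤ)^(l-i) * (((m-i).choose (l-i) : ℕ)) * ((f i : ℤ))
        = h l := (hh l).symm
    have e3 : ∑ i ∈ range (l+1), (-1:ℤ)^(l-i) * (((m-i).choose (l-i) : ℕ)) * ((f i : ℤ))
        = ∑ i ∈ range (l+1), (-1:ℤ)^(l-i) * (((m-i).choose (l-i) : ℕ)) * (F' i) := by
      rw [e1, e2]
    rw [Finset.sum_range_succ, Finset.sum_range_succ] at e3
    have e4 : ∑ i ∈ range l, (-1:ℤ)^(l-i) * (((m-i).choose (l-i) : ℕ)) * ((f i : ℤ))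
        = ∑ i ∈ range l, (-1:ℤ)^(l-i) * (((m-i).choose (l-i) : ℕ)) * (F' i) := by
      apply Finset.sum_congr rfl
      intro i hi
      simp only [Finset.mem_range] at hi
      rw [IH i hi (by omega)]
    rw [e4] at e3
    simpa using e3
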